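/- arXiv:1005.1492 — 2 statements merged into one kernel-verified Lean document; each statement's English description precedes it below -/
import Mathlib

section
/- For every w ∈ ℝ with w not a multiple of 2π, the integral ∫₀¹ ((1-r²)/(1-2r·cos w + r²) - 1) · (1/r) dr equals -log(2(1-cos w)). -/
/-!
Away from `r = 0` the integrand simplifies to `(2c - 2r) / (1 - 2rc + r²)` with `c = cos w`, which is
the derivative of `-log (1 - 2rc + r²)`. Since `cos w < 1`, the quadratic stays positive on `[0, 1]`,
so the fundamental theorem of calculus gives `-log (2 - 2c) + log 1`.
-/

open MeasureTheory Real Set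

lemma cos_lt_one_of_forall_ne_two_mul_int_mul_pi {w : ℝ} (hw : ∀ k : ℤ, w ≠ 2 * k * π) :
    cos w < 1 := by
  refine (cos_le_one w).lt_of_ne fun h => ?_
  obtain ⟨k, hk⟩ := (cos_eq_one_iff w).mp h
  exact hw k (by rw [← hk]; ring)

lemma one_sub_two_mul_mul_add_sq_pos {c r : ℝ} (hc : c < 1) (hr : 0 ≤ r) :
    0 < 1 - 2 * r * c + r ^ 2 := by
  rcases hr.eq_or_lt with rfl | hr
  · norm_num
  · nlinarith [sq_nonneg (1 - r)]

lemma poissonKernel_sub_one_div_eq {c r : ℝ} (hr : r ≠ 0) (hQ : 1 - 2 * r * c + r ^ 2 ≠ 0) :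
    ((1 - r ^ 2) / (1 - 2 * r * c + r ^ 2) - 1) * (1 / r)
      = (2 * c - 2 * r) / (1 - 2 * r * c + r ^ 2) := by
  rw [div_sub_one hQ]
  field_simp
  ring

lemma hasDerivAt_neg_log_one_sub_two_mul_mul_add_sq {c r : ℝ} (hQ : 1 - 2 * r * c + r ^ 2 ≠ 0) :
    HasDerivAt (fun r => -log (1 - 2 * r * c + r ^ 2))
      ((2 * c - 2 * r) / (1 - 2 * r * c + r ^ 2)) r := by
  have hQ' : HasDerivAt (fun r : ℝ => 1 - 2 * r * c + r ^ 2) (2 * r - 2 * c) r :=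
    (((((hasDerivAt_id' r).const_mul 2).mul_const c).const_sub 1).add
      (hasDerivAt_pow 2 r)).congr_deriv (by simp; ring)
  exact (hQ'.log hQ).neg.congr_deriv (by ring)

theorem integral_Ioo_poissonKernel_sub_one_div {c : ℝ} (hc : c < 1) :
    ∫ r in Ioo (0 : ℝ) 1, ((1 - r ^ 2) / (1 - 2 * r * c + r ^ 2) - 1) * (1 / r)
      = -log (2 * (1 - c)) := by
  have hQ : ∀ r ∈ uIcc (0 : ℝ) 1, 1 - 2 * r * c + r ^ 2 ≠ 0 := fun r hr =>
    (one_sub_two_mul_mul_add_sq_pos hc (by rw [uIcc_of_le zero_le_one] at hr; exact hr.1)).ne'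
  have hcont : ContinuousOn (fun r : ℝ => (2 * c - 2 * r) / (1 - 2 * r * c + r ^ 2))
      (uIcc 0 1) :=
    ContinuousOn.div (by fun_prop) (by fun_prop) hQ
  calc ∫ r in Ioo (0 : ℝ) 1, ((1 - r ^ 2) / (1 - 2 * r * c + r ^ 2) - 1) * (1 / r)
      = ∫ r in Ioo (0 : ℝ) 1, (2 * c - 2 * r) / (1 - 2 * r * c + r ^ 2) :=
        setIntegral_congr_fun measurableSet_Ioo fun r hr => poissonKernel_sub_one_div_eq hr.1.ne'
          (hQ r (Icc_subset_uIcc (Ioo_subset_Icc_self hr)))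
    _ = ∫ r in (0 : ℝ)..1, (2 * c - 2 * r) / (1 - 2 * r * c + r ^ 2) := by
        rw [intervalIntegral.integral_of_le zero_le_one, integral_Ioc_eq_integral_Ioo]
    _ = -log (2 * (1 - c)) := by
        rw [intervalIntegral.integral_eq_sub_of_hasDerivAt
          (fun r hr => hasDerivAt_neg_log_one_sub_two_mul_mul_add_sq (hQ r hr))
          hcont.intervalIntegrable]
        norm_num [show (1 : ℝ) - 2 * c + 1 = 2 * (1 - c) by ring]

theorem stmt_0 (w : ℝ) (hw : ∀ k : ℤ, w ≠ 2 * k * π) :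
    ∫ r in Set.Ioo (0:ℝ) 1,
      ((1 - r ^ 2) / (1 - 2 * r * Real.cos w + r ^ 2) - 1) * (1 / r)
      = - Real.log (2 * (1 - Real.cos w)) :=
  integral_Ioo_poissonKernel_sub_one_div (cos_lt_one_of_forall_ne_two_mul_int_mul_pi hw)
end

section
/- Let k be an odd natural number, and for θ ≠ φ with |θ - φ| < π set Δ = 2(1 - cos(θ-φ)). Then (cos(θ-φ))^i (-sin(θ-φ))^j / Δ^{(j+1)/2} = -1/sin(θ-φ) + O(|θ-φ|^{-1/2}) as long as i + j = s, j = 2s - k, uniformly for (θ,φ) in the region θ/2 ≤ φ ≤ 3θ/2, θ ∈ (0, π/2): i.e., there is C with |(cos(θ-φ))^i (sin(θ-φ))^j / (2(1-cos(θ-φ)))^{(j+1)/2} · (-1)^j + 1/sin(θ-φ)| ≤ C |θ-φ|^{-1/2}. -/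
open Real

set_option maxHeartbeats 1000000 in
theorem stmt_19 (k s i j : ℕ) (hk : Odd k) (hs1 : 1 ≤ s) (hsk : s ≤ k)
    (hij : i + j = s) (hjk : (j : ℤ) = 2 * s - k) :
    ∃ C : ℝ, 0 < C ∧
      ∀ θ φ : ℝ, θ ∈ Set.Ioo 0 (π / 2) → θ / 2 ≤ φ → φ ≤ 3 * θ / 2 → θ ≠ φ →
        |(Real.cos (θ - φ)) ^ i * (Real.sin (θ - φ)) ^ j /
              (2 * (1 - Real.cos (θ - φ))) ^ (((j : ℝ) + 1) / 2) * (-1) ^ j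
            + 1 / Real.sin (θ - φ)|
          ≤ C * |θ - φ| ^ (-(1:ℝ)/2) := by
  obtain ⟨m, hm⟩ := hk
  have hjodd : Odd j := ⟨s - m - 1, by omega⟩
  refine ⟨(s + 1) * π, by positivity, ?_⟩
  intro θ φ hθ hφ1 hφ2 hne
  set w : ℝ := θ - φ with hw
  have hθ0 : 0 < θ := hθ.1
  have hθπ : θ < π / 2 := hθ.2
  have hw0 : w ≠ 0 := sub_ne_zero.mpr hne
  have hpi3 : (3:ℝ) < π := Real.pi_gt_three
  have hpi4 : π < 3.15 := Real.pi_lt_d2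
  have hwa : |w| ≤ θ / 2 := by
    rw [abs_le]; constructor <;> simp only [hw] <;> linarith
  have hwa1 : |w| < 1 := by
    calc |w| ≤ θ / 2 := hwa
    _ < π / 4 := by linarith
    _ < 1 := by linarith
  have hwpos : 0 < |w| := abs_pos.mpr hw0
  have hwhalf : |w| ≤ π / 2 := by nlinarith
  have hwle := abs_le.mp hwhalf
  have hwle1 := abs_le.mp hwa1.le
  -- basic trig facts
  have hch : 0 < Real.cos (w / 2) :=
    Real.cos_pos_of_mem_Ioo ⟨by linarith, by linarith⟩
  have hcw : 0 < Real.cos w :=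
    Real.cos_pos_of_mem_Ioo ⟨by linarith, by linarith⟩
  have hsh : Real.sin (w / 2) ≠ 0 := by
    rcases (hw0.lt_or_gt) with h | h
    · have hpos : 0 < Real.sin (-(w / 2)) :=
        Real.sin_pos_of_pos_of_lt_pi (by linarith) (by linarith)
      rw [Real.sin_neg] at hpos; linarith
    · exact (Real.sin_pos_of_pos_of_lt_pi (by linarith) (by linarith)).ne'
  have hsin2 : Real.sin w = 2 * Real.sin (w / 2) * Real.cos (w / 2) := by
    have := Real.sin_two_mul (w / 2)
    rw [show 2 * (w / 2) = w by ring] at this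
    linarith
  have hsinne : Real.sin w ≠ 0 := by
    rw [hsin2]
    exact mul_ne_zero (mul_ne_zero two_ne_zero hsh) hch.ne'
  -- rewrite the power of Δ
  have hΔ : 2 * (1 - Real.cos w) = (2 * Real.sin (w / 2)) ^ 2 := by
    have h := Real.sin_sq_eq_half_sub (w / 2)
    rw [show 2 * (w / 2) = w by ring] at h
    nlinarith
  have hpow : (2 * (1 - Real.cos w)) ^ (((j:ℝ) + 1) / 2)
      = (2 * Real.sin (w / 2)) ^ (j + 1) := by
    rw [hΔ, ← sq_abs (2 * Real.sin (w / 2))]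
    rw [← Real.rpow_natCast |2 * Real.sin (w / 2)| 2, ← Real.rpow_mul (abs_nonneg _)]
    rw [show ((2:ℕ):ℝ) * (((j:ℝ) + 1) / 2) = ((j + 1 : ℕ) : ℝ) by push_cast; ring]
    rw [Real.rpow_natCast]
    exact (hjodd.add_one).pow_abs _
  -- the key algebraic identity
  have hId : Real.cos w ^ i * Real.sin w ^ j / (2 * Real.sin (w / 2)) ^ (j + 1) * (-1:ℝ) ^ j
        + 1 / Real.sin w
      = (1 - Real.cos w ^ i * Real.cos (w / 2) ^ (j + 1)) / Real.sin w := by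
    rw [hjodd.neg_one_pow]
    rw [hsin2]
    field_simp
    ring
  rw [hpow, hId]
  -- bound the numerator
  set P : ℝ := Real.cos w ^ i * Real.cos (w / 2) ^ (j + 1) with hP
  have hd : w ^ 2 / 2 < 1 / 2 := by nlinarith [sq_abs w]
  have hca : 1 - w ^ 2 / 2 ≤ Real.cos w := Real.one_sub_sq_div_two_le_cos
  have hcb : 1 - w ^ 2 / 2 ≤ Real.cos (w / 2) := by
    have := Real.one_sub_sq_div_two_le_cos (x := w / 2)
    nlinarith [sq_nonneg w]
  have hdpos : (0:ℝ) ≤ 1 - w ^ 2 / 2 := by nlinarith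
  have hPlow : 1 - (i + (j + 1)) * (w ^ 2 / 2) ≤ P := by
    have h1 : (1 - w ^ 2 / 2) ^ (i + (j + 1)) ≤ P := by
      rw [pow_add]
      exact mul_le_mul (pow_le_pow_left₀ hdpos hca i) (pow_le_pow_left₀ hdpos hcb (j + 1))
        (by positivity) (by positivity)
    have h2 := one_add_mul_le_pow (a := -(w ^ 2 / 2))
      (by linarith : (-2:ℝ) ≤ -(w ^ 2 / 2)) (i + (j + 1))
    have h3 : (1 : ℝ) + -(w ^ 2 / 2) = 1 - w ^ 2 / 2 := by ring
    rw [h3] at h2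
    push_cast at h2 ⊢
    nlinarith
  have hP1 : P ≤ 1 := by
    have : Real.cos w ^ i ≤ 1 :=
      pow_le_one₀ hcw.le (Real.cos_le_one w)
    have h2 : Real.cos (w / 2) ^ (j + 1) ≤ 1 :=
      pow_le_one₀ hch.le (Real.cos_le_one _)
    nlinarith [pow_nonneg hcw.le i, pow_nonneg hch.le (j + 1)]
  have hns : (i:ℝ) + ((j:ℝ) + 1) = (s:ℝ) + 1 := by
    have h : ((i + (j + 1) : ℕ) : ℝ) = ((s + 1 : ℕ) : ℝ) := by norm_cast; omega
    push_cast at h; linarith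
  have hnum : |1 - P| ≤ ((s:ℝ) + 1) * (w ^ 2 / 2) := by
    rw [abs_of_nonneg (by linarith)]
    rw [hns] at hPlow
    linarith
  have hsinlow : 2 / π * |w| ≤ |Real.sin w| := Real.mul_abs_le_abs_sin hwhalf
  rw [abs_div]
  have hstep : |1 - P| / |Real.sin w| ≤ (((s:ℝ) + 1) * (w ^ 2 / 2)) / (2 / π * |w|) :=
    div_le_div₀ (by positivity) hnum (by positivity) hsinlow
  have hπ0 : π ≠ 0 := Real.pi_ne_zero
  have heq : (((s:ℝ) + 1) * (w ^ 2 / 2)) / (2 / π * |w|) = ((s:ℝ) + 1) * π * |w| / 4 := by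
    have hgen : ∀ x : ℝ, 0 < x →
        (((s:ℝ) + 1) * (x ^ 2 / 2)) / (2 / π * x) = ((s:ℝ) + 1) * π * x / 4 := by
      intro x hx
      field_simp
      ring
    rw [← sq_abs w]
    exact hgen |w| hwpos
  have hww : |w| ≤ |w| ^ (-(1:ℝ)/2) := by
    have h := Real.rpow_le_rpow_of_exponent_ge hwpos hwa1.le
      (show -(1:ℝ)/2 ≤ 1 by norm_num)
    rwa [Real.rpow_one] at h
  have hs1' : (0:ℝ) < (s:ℝ) + 1 := by positivity
  calc |1 - P| / |Real.sin w| ≤ (((s:ℝ) + 1) * (w ^ 2 / 2)) / (2 / π * |w|) := hstep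
    _ = ((s:ℝ) + 1) * π * |w| / 4 := heq
    _ ≤ ((s:ℝ) + 1) * π * (|w| ^ (-(1:ℝ)/2)) := by
        have hml : ((s:ℝ) + 1) * π * |w| ≤ ((s:ℝ) + 1) * π * (|w| ^ (-(1:ℝ)/2)) :=
          mul_le_mul_of_nonneg_left hww (by positivity)
        have h0 : 0 ≤ ((s:ℝ) + 1) * π * |w| := by positivity
        linarith
    _ = ((s:ℝ) + 1) * π * |w| ^ (-(1:ℝ)/2) := by ring
end
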